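/- arXiv:2501.14588 — 8 statements merged into one kernel-verified Lean document; each statement's English description precedes it below -/
import Mathlib

section
/- Let M ≥ 2, let σ : {1,…,M} → ℝ with σ_m > 0 for all m, let P > 0 and ε > 0, and set Σσ = Σ_{i=1}^M σ_i. Define d*_m = (M−1)·P/(ε·Σσ) · (1 − σ_m·(M−1)/Σσ) for each m, and assume σ_m·(M−1) < Σσ for every m (so that each d*_m > 0). Then (i) Σ_{m=1}^M d*_m = (M−1)·P/(ε·Σσ), and (ii) for every m the first-order condition P·(Σ_{i≠m} d*_i)/(Σ_{i=1}^M d*_i)² = ε·σ_m holds. -/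
/-- the closed-form profile `d*_m = (M−1)·P/(ε·Σσ)·(1 − σ_m·(M−1)/Σσ)`
has total `(M−1)·P/(ε·Σσ)` and satisfies every center's first-order condition. -/
theorem computing_centers_foc (M : ℕ) (hM : 2 ≤ M) (σ : Fin M → ℝ) (hσ : ∀ m, 0 < σ m)
    (P ε : ℝ) (hP : 0 < P) (hε : 0 < ε)
    (hint : ∀ m, σ m * ((M : ℝ) - 1) < ∑ i, σ i)
    (d : Fin M → ℝ)
    (hd : ∀ m, d m = ((M : ℝ) - 1) * P / (ε * ∑ i, σ i) *
      (1 - σ m * ((M : ℝ) - 1) / ∑ i, σ i)) :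
    (∑ m, d m = ((M : ℝ) - 1) * P / (ε * ∑ i, σ i)) ∧
    ∀ m, P * (∑ i ∈ Finset.univ.erase m, d i) / (∑ i, d i) ^ 2 = ε * σ m := by
  have hMpos : 0 < M := by omega
  haveI : Nonempty (Fin M) := ⟨⟨0, hMpos⟩⟩
  set S := ∑ i, σ i with hSdef
  have hS : 0 < S := Finset.sum_pos (fun i _ => hσ i) Finset.univ_nonempty
  have hM1 : (0:ℝ) < (M:ℝ) - 1 := by
    have : (2:ℝ) ≤ (M:ℝ) := by exact_mod_cast hM
    linarith
  set T := ((M : ℝ) - 1) * P / (ε * S) with hTdef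
  have hT : 0 < T := by positivity
  have hsum : ∑ m, d m = T := by
    have h1 : ∑ m, d m = ∑ m : Fin M, T * (1 - σ m * ((M : ℝ) - 1) / S) :=
      Finset.sum_congr rfl (fun m _ => hd m)
    rw [h1, ← Finset.mul_sum]
    have h2 : ∑ m : Fin M, (1 - σ m * ((M : ℝ) - 1) / S)
        = (M : ℝ) - (∑ m : Fin M, σ m) * (((M : ℝ) - 1) / S) := by
      rw [Finset.sum_sub_distrib, Finset.sum_const, Finset.card_univ, Fintype.card_fin,
        nsmul_eq_mul, mul_one]
      simp_rw [mul_div_assoc]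
      rw [← Finset.sum_mul]
    rw [h2, ← hSdef, mul_div_cancel₀ _ (ne_of_gt hS)]
    ring
  refine ⟨hsum, fun m => ?_⟩
  have herase : ∑ i ∈ Finset.univ.erase m, d i = T - d m := by
    rw [← hsum]
    rw [← Finset.sum_erase_add _ _ (Finset.mem_univ m)]
    ring
  rw [herase, hd m, hsum, hTdef]
  field_simp
  ring
end

section
/- Let M ≥ 2, let σ_m > 0 for all m ∈ {1,…,M}, let P > 0 and ε > 0, set Σσ = Σ_{i=1}^M σ_i, and define d*_m = (M−1)·P/(ε·Σσ) · (1 − σ_m·(M−1)/Σσ). Assume σ_m·(M−1) < Σσ for every m. Then the profile (d*_1,…,d*_M) is a Nash equilibrium of the computing centers' game: for every m and every d ≥ 0, P·d*_m/(d*_m + Σ_{i≠m} d*_i) − ε·σ_m·d*_m ≥ P·d/(d + Σ_{i≠m} d*_i) − ε·σ_m·d. -/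
/-!
Against rivals whose quantities add up to `s > 0`, a center with unit cost `c` faces the
concave payoff `x ↦ P x / (x + s) - c x`, which is maximised where `c (x + s)² = P s`; the
deficit of any other quantity is an explicit square. The closed-form profile adds up to
`K = (M - 1) P / (ε Σσ)`, so the rivals of center `m` hold `K - d*_m = K σ_m (M - 1) / Σσ`,
and this is exactly the first-order condition `ε σ_m K² = P (K - d*_m)`.
-/

open Finset

section Utility

variable {𝕜 : Type*} [Field 𝕜] [LinearOrder 𝕜] [IsStrictOrderedRing 𝕜]

/-- The utility `U_m` of the paper, with `c = ε σ_m` and `s = Σ_{i ≠ m} d_i`. -/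
def utility (P c s x : 𝕜) : 𝕜 :=
  P * x / (x + s) - c * x

theorem utility_sub_utility_of_mul_sq_eq {P c s d x : 𝕜} (hds : d + s ≠ 0) (hxs : x + s ≠ 0)
    (h : c * (d + s) ^ 2 = P * s) :
    utility P c s d - utility P c s x = P * s * (x - d) ^ 2 / ((x + s) * (d + s) ^ 2) := by
  have hc : c = P * s / (d + s) ^ 2 := by
    rw [eq_div_iff (pow_ne_zero 2 hds), h]
  unfold utility
  subst hc
  field_simp
  ring

theorem utility_le_of_mul_sq_eq {P c s d x : 𝕜} (hP : 0 ≤ P) (hs : 0 < s) (hds : d + s ≠ 0)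
    (hx : 0 ≤ x) (h : c * (d + s) ^ 2 = P * s) :
    utility P c s x ≤ utility P c s d := by
  have hxs : 0 < x + s := by linarith
  rw [← sub_nonneg, utility_sub_utility_of_mul_sq_eq hds hxs.ne' h]
  positivity

end Utility

theorem sum_eq_of_eq_mul_one_sub {ι 𝕜 : Type*} [Fintype ι] [Field 𝕜] {σ d : ι → 𝕜} {K : 𝕜}
    (hσ : ∑ i, σ i ≠ 0)
    (hd : ∀ i, d i = K * (1 - σ i * ((Fintype.card ι : 𝕜) - 1) / ∑ j, σ j)) :
    ∑ i, d i = K := by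
  simp only [hd, ← mul_sum, sum_sub_distrib, ← sum_div, ← sum_mul, sum_const, card_univ,
    nsmul_eq_mul, mul_one]
  field_simp
  ring

theorem computing_centers_nash_general (M : ℕ) (hM : 2 ≤ M) (σ : Fin M → ℝ) (hσ : ∀ m, 0 < σ m)
    (P ε : ℝ) (hP : 0 < P) (hε : 0 < ε)
    (d : Fin M → ℝ)
    (hd : ∀ m, d m = ((M : ℝ) - 1) * P / (ε * ∑ i, σ i) *
      (1 - σ m * ((M : ℝ) - 1) / ∑ i, σ i)) :
    ∀ m, ∀ x : ℝ, 0 ≤ x →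
      P * x / (x + ∑ i ∈ Finset.univ.erase m, d i) - ε * σ m * x ≤
      P * d m / (d m + ∑ i ∈ Finset.univ.erase m, d i) - ε * σ m * d m := by
  intro m x hx
  have hM1 : (0 : ℝ) < M - 1 := by
    have : (2 : ℝ) ≤ M := by exact_mod_cast hM
    linarith
  have hS : 0 < ∑ i, σ i := sum_pos (fun i _ => hσ i) ⟨m, mem_univ m⟩
  set K := ((M : ℝ) - 1) * P / (ε * ∑ i, σ i) with hK_def
  have hK : 0 < K := by positivity
  have htotal : ∑ i, d i = K :=
    sum_eq_of_eq_mul_one_sub hS.ne' (by simpa only [Fintype.card_fin] using hd)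
  have hrivals : ∑ i ∈ univ.erase m, d i = K * (σ m * (M - 1) / ∑ i, σ i) := by
    rw [sum_erase_eq_sub (mem_univ m), htotal, hd m]
    ring
  have hsplit : d m + ∑ i ∈ univ.erase m, d i = K := by
    rw [add_sum_erase univ d (mem_univ m), htotal]
  have hrivals_pos : 0 < ∑ i ∈ univ.erase m, d i := by
    rw [hrivals]
    have := hσ m
    positivity
  have hfirst_order : ε * σ m * (d m + ∑ i ∈ univ.erase m, d i) ^ 2
      = P * ∑ i ∈ univ.erase m, d i := by
    rw [hsplit, hrivals, hK_def]
    field_simp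
  exact utility_le_of_mul_sq_eq hP.le hrivals_pos (hsplit ▸ hK.ne') hx hfirst_order

/-- the closed-form profile `d*_m = (M−1)·P/(ε·Σσ)·(1 − σ_m·(M−1)/Σσ)`
is a Nash equilibrium of the computing centers' game. -/
theorem computing_centers_nash (M : ℕ) (hM : 2 ≤ M) (σ : Fin M → ℝ) (hσ : ∀ m, 0 < σ m)
    (P ε : ℝ) (hP : 0 < P) (hε : 0 < ε)
    (hint : ∀ m, σ m * ((M : ℝ) - 1) < ∑ i, σ i)
    (d : Fin M → ℝ)
    (hd : ∀ m, d m = ((M : ℝ) - 1) * P / (ε * ∑ i, σ i) *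
      (1 - σ m * ((M : ℝ) - 1) / ∑ i, σ i)) :
    ∀ m, ∀ x : ℝ, 0 ≤ x →
      P * x / (x + ∑ i ∈ Finset.univ.erase m, d i) - ε * σ m * x ≤
      P * d m / (d m + ∑ i ∈ Finset.univ.erase m, d i) - ε * σ m * d m :=
  computing_centers_nash_general M hM σ hσ P ε hP hε d hd
end

section
/- Let M ≥ 2, let σ_m > 0 for all m, let P > 0 and ε > 0, and set Σσ = Σ_{i=1}^M σ_i. Suppose (d_1,…,d_M) is a profile with d_m > 0 for every m that satisfies all first-order conditions P·(Σ_{i≠m} d_i)/(Σ_{i=1}^M d_i)² = ε·σ_m. Then necessarily d_m = (M−1)·P/(ε·Σσ) · (1 − σ_m·(M−1)/Σσ) for every m; in particular the interior Nash equilibrium of the computing centers' game is unique. -/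
/-- any interior profile satisfying all first-order conditions of the
computing centers' game equals the closed form; hence the interior Nash equilibrium
is unique. -/
theorem computing_centers_nash_unique (M : ℕ) (hM : 2 ≤ M) (σ : Fin M → ℝ)
    (hσ : ∀ m, 0 < σ m) (P ε : ℝ) (hP : 0 < P) (hε : 0 < ε)
    (d : Fin M → ℝ) (hdpos : ∀ m, 0 < d m)
    (hfoc : ∀ m, P * (∑ i ∈ Finset.univ.erase m, d i) / (∑ i, d i) ^ 2 = ε * σ m) :
    ∀ m, d m = ((M : ℝ) - 1) * P / (ε * ∑ i, σ i) *
      (1 - σ m * ((M : ℝ) - 1) / ∑ i, σ i) := by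
  have hMpos : 0 < M := by omega
  set S := ∑ i, d i with hSdef
  have hS : 0 < S := Finset.sum_pos (fun i _ => hdpos i) ⟨⟨0, hMpos⟩, Finset.mem_univ _⟩
  have hsig : 0 < ∑ i, σ i := Finset.sum_pos (fun i _ => hσ i) ⟨⟨0, hMpos⟩, Finset.mem_univ _⟩
  have hd : ∀ m, d m = S - ε * σ m * S ^ 2 / P := by
    intro m
    have h := hfoc m
    have herase : ∑ i ∈ Finset.univ.erase m, d i = S - d m := by
      rw [hSdef, Finset.sum_erase_eq_sub (Finset.mem_univ m)]
    rw [herase] at h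
    field_simp at h ⊢
    nlinarith [hS, hP]
  have hsum : S = M * S - ε * (∑ i, σ i) * S ^ 2 / P := by
    calc S = ∑ m, d m := rfl
    _ = ∑ m : Fin M, (S - ε * σ m * S ^ 2 / P) :=
        Finset.sum_congr rfl (fun m _ => hd m)
    _ = M * S - ε * (∑ i, σ i) * S ^ 2 / P := by
        rw [Finset.sum_sub_distrib, Finset.sum_const, Finset.card_univ, Fintype.card_fin]
        rw [nsmul_eq_mul]
        congr 1
        rw [Finset.mul_sum, Finset.sum_mul, Finset.sum_div]
  have hSval : S = ((M : ℝ) - 1) * P / (ε * ∑ i, σ i) := by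
    have hM1 : (1 : ℝ) ≤ (M : ℝ) := by exact_mod_cast Nat.one_le_of_lt hM
    field_simp at hsum ⊢
    nlinarith [hS, hsig, hε]
  intro m
  rw [hd m, hSval]
  field_simp
end

section
/- Let N ≥ 2, let f_n > 0 for all n ∈ {1,…,N}, let η > 0, λ > 0, ρ > 0, and set H = Σ_{i=1}^N 1/f_i. Suppose (q_1,…,q_N) is a profile with q_n > 0 for all n satisfying the first-order conditions η/(Σ_{i=1}^N q_i) − η·q_n/(Σ_{i=1}^N q_i)² = λ·ρ/f_n for every n. Then Σ_{i=1}^N q_i = (N−1)·η/(λ·ρ·H). -/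
/-!
Summing the first-order conditions over all data owners makes the individual contributions
disappear: the left-hand sides add up to `(N - 1) η / S` with `S = Σ qᵢ`, the right-hand sides
to `λ ρ H`. Solving `(N - 1) η / S = λ ρ H` for `S` through `a / (a / S) = S`, which holds for
every `a ≠ 0` (also at `S = 0`, where `x / 0 = 0`), gives the claim.
-/

open Finset

theorem sum_div_sub_mul_div_sq {ι K : Type*} [Fintype ι] [Field K] (η : K) (q : ι → K) :
    ∑ n, (η / ∑ i, q i - η * q n / (∑ i, q i) ^ 2) =
      ((Fintype.card ι : K) - 1) * η / ∑ i, q i := by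
  set S := ∑ i, q i
  have h_share : ∑ n, η * q n / S ^ 2 = η / S := by
    rw [← sum_div, ← mul_sum, mul_div_assoc, sq, div_self_mul_self', div_eq_mul_inv]
  rw [sum_sub_distrib, h_share, sum_const, card_univ, nsmul_eq_mul]
  ring

theorem data_owners_total_contribution_general (N : ℕ) (hN : 2 ≤ N) (f : Fin N → ℝ)
    (η lam ρ : ℝ) (hη : 0 < η)
    (q : Fin N → ℝ)
    (hfoc : ∀ n, η / (∑ i, q i) - η * q n / (∑ i, q i) ^ 2 = lam * ρ / f n) :
    ∑ i, q i = ((N : ℝ) - 1) * η / (lam * ρ * ∑ i, 1 / f i) := by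
  have h_summed : ((N : ℝ) - 1) * η / ∑ i, q i = lam * ρ * ∑ i, 1 / f i :=
    calc ((N : ℝ) - 1) * η / ∑ i, q i
        = ∑ n, (η / ∑ i, q i - η * q n / (∑ i, q i) ^ 2) := by
          rw [sum_div_sub_mul_div_sq, Fintype.card_fin]
      _ = ∑ n, lam * ρ * (1 / f n) := sum_congr rfl fun n _ => by rw [hfoc n, mul_one_div]
      _ = lam * ρ * ∑ i, 1 / f i := (mul_sum ..).symm
  have hN' : (1 : ℝ) < N := by exact_mod_cast hN
  rw [← h_summed, div_div_cancel₀ (by nlinarith)]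

/-- any interior profile satisfying the data owners' first-order
conditions has total contribution `(N−1)·η/(λ·ρ·H)` with `H = Σ 1/f_i`. -/
theorem data_owners_total_contribution (N : ℕ) (hN : 2 ≤ N) (f : Fin N → ℝ)
    (hf : ∀ n, 0 < f n) (η lam ρ : ℝ) (hη : 0 < η) (hlam : 0 < lam) (hρ : 0 < ρ)
    (q : Fin N → ℝ) (hq : ∀ n, 0 < q n)
    (hfoc : ∀ n, η / (∑ i, q i) - η * q n / (∑ i, q i) ^ 2 = lam * ρ / f n) :
    ∑ i, q i = ((N : ℝ) - 1) * η / (lam * ρ * ∑ i, 1 / f i) :=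
  data_owners_total_contribution_general N hN f η lam ρ hη q hfoc
end

section
/- Let N ≥ 2, let f_n > 0 for all n ∈ {1,…,N}, let η > 0, λ > 0, ρ > 0, and set H = Σ_{i=1}^N 1/f_i. Define q*_n = (N−1)·η/(λ·ρ·H) · (1 − (N−1)/(f_n·H)) for each n. Then Σ_{i=1}^N q*_i = (N−1)·η/(λ·ρ·H), and for every n the first-order condition η·(Σ_{i≠n} q*_i)/(Σ_{i=1}^N q*_i)² = λ·ρ/f_n holds. -/
/-!
Write `H = ∑ 1 / fᵢ` and `C = (N - 1) η / (λ ρ H)`. Then `q*ₙ = C - C (N - 1) / (fₙ H)`, and the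
subtracted terms add up to `(N - 1) C`, so the total is `C`. Hence `∑_{i ≠ n} q*ᵢ = C (N - 1) / (fₙ H)`,
and the first-order condition reduces to the defining equation of `C`.
-/

open Finset

lemma sum_mul_one_sub_div_mul_sum_one_div {ι : Type*} [Fintype ι] (c a : ℝ) (f : ι → ℝ)
    (hH : ∑ i, 1 / f i ≠ 0) :
    ∑ n, c * (1 - a / (f n * ∑ i, 1 / f i)) = c * (Fintype.card ι - a) := by
  have hsplit : ∀ n, c * (1 - a / (f n * ∑ i, 1 / f i)) =
      c - c * a / (∑ i, 1 / f i) * (1 / f n) := fun n => by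
    rw [mul_comm (f n), ← div_div, div_eq_mul_one_div (a / _)]
    ring
  simp only [hsplit, sum_sub_distrib, sum_const, card_univ, nsmul_eq_mul, ← mul_sum]
  field_simp

lemma div_sq_sub_mul_one_sub_div {η μ k H x : ℝ} (hη : η ≠ 0) (hμ : μ ≠ 0) (hk : k ≠ 0)
    (hH : H ≠ 0) (hx : x ≠ 0) :
    η * (k * η / (μ * H) - k * η / (μ * H) * (1 - k / (x * H))) / (k * η / (μ * H)) ^ 2
      = μ / x := by
  field_simp
  ring

/-- the closed-form profile `q*_n = (N−1)·η/(λ·ρ·H)·(1 − (N−1)/(f_n·H))`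
has total `(N−1)·η/(λ·ρ·H)` and satisfies every data owner's first-order condition. -/
theorem data_owners_foc (N : ℕ) (hN : 2 ≤ N) (f : Fin N → ℝ) (hf : ∀ n, 0 < f n)
    (η lam ρ : ℝ) (hη : 0 < η) (hlam : 0 < lam) (hρ : 0 < ρ)
    (q : Fin N → ℝ)
    (hq : ∀ n, q n = ((N : ℝ) - 1) * η / (lam * ρ * ∑ i, 1 / f i) *
      (1 - ((N : ℝ) - 1) / (f n * ∑ i, 1 / f i))) :
    (∑ i, q i = ((N : ℝ) - 1) * η / (lam * ρ * ∑ i, 1 / f i)) ∧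
    ∀ n, η * (∑ i ∈ Finset.univ.erase n, q i) / (∑ i, q i) ^ 2 = lam * ρ / f n := by
  have hH : 0 < ∑ i, 1 / f i :=
    sum_pos (fun i _ => one_div_pos.mpr (hf i)) (univ_nonempty_iff.mpr ⟨⟨0, by omega⟩⟩)
  have hN1 : (N : ℝ) - 1 ≠ 0 := by
    have : (2 : ℝ) ≤ N := by exact_mod_cast hN
    linarith
  have htotal : ∑ i, q i = ((N : ℝ) - 1) * η / (lam * ρ * ∑ i, 1 / f i) := by
    rw [sum_congr rfl fun n _ => hq n, sum_mul_one_sub_div_mul_sum_one_div _ _ _ hH.ne',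
      Fintype.card_fin]
    ring
  refine ⟨htotal, fun n => ?_⟩
  rw [sum_erase_eq_sub (mem_univ n), htotal, hq n]
  exact div_sq_sub_mul_one_sub_div hη.ne' (mul_pos hlam hρ).ne' hN1 hH.ne' (hf n).ne'
end

section
/- Let N ≥ 2, let f_n > 0 for all n ∈ {1,…,N}, let η > 0, λ > 0, ρ > 0, set H = Σ_{i=1}^N 1/f_i, and assume f_n·H > N−1 for every n. Define q*_n = (N−1)·η/(λ·ρ·H) · (1 − (N−1)/(f_n·H)), so q*_n > 0 for all n. Then (q*_1,…,q*_N) is a Nash equilibrium of the data owners' game: for every n and every q ≥ 0, η·q*_n/(q*_n + Σ_{i≠n} q*_i) − (λ·ρ/f_n)·q*_n ≥ η·q/(q + Σ_{i≠n} q*_i) − (λ·ρ/f_n)·q. -/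
/-! Each owner faces a Tullock contest against the others' total `S`: the payoff
`η x / (x + S) - c x` is concave in `x`, and when `c (q + S)² = η S` it falls short of its
value at `q` by exactly `c (q - x)² / (x + S)`. With `H = ∑ 1 / f i`, the profile `q*` sums to
`A = (N - 1) η / (λ ρ H)`, and `A - q*_n = A (N - 1) / (f_n H)` is precisely what makes the
condition `(λ ρ / f_n) A² = η (A - q*_n)` hold for every owner. -/

open Finset

theorem tullock_payoff_le_of_sq_eq {η c S q x : ℝ} (hc : 0 ≤ c) (hqS : q + S ≠ 0)
    (hxS : 0 < x + S) (hfoc : c * (q + S) ^ 2 = η * S) :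
    η * x / (x + S) - c * x ≤ η * q / (q + S) - c * q := by
  have gap : (η * q / (q + S) - c * q) - (η * x / (x + S) - c * x)
      = c * (q - x) ^ 2 / (x + S) := by
    field_simp
    linear_combination (x - q) * hfoc
  have : 0 ≤ c * (q - x) ^ 2 / (x + S) := by positivity
  linarith

theorem sum_one_sub_div_mul_sum_inv {ι : Type*} [Fintype ι] (f : ι → ℝ)
    (hH : ∑ j, 1 / f j ≠ 0) :
    ∑ i, (1 - ((Fintype.card ι : ℝ) - 1) / (f i * ∑ j, 1 / f j)) = 1 := by
  have split : ∀ i, ((Fintype.card ι : ℝ) - 1) / (f i * ∑ j, 1 / f j)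
      = ((Fintype.card ι : ℝ) - 1) / (∑ j, 1 / f j) * (1 / f i) := by
    intro i
    rw [div_mul_div_comm, mul_one, mul_comm (f i)]
  simp_rw [sum_sub_distrib, split, ← mul_sum, div_mul_cancel₀ _ hH]
  simp

/-- under `f_n·H > N−1` for all `n`, the closed-form profile
`q*_n = (N−1)·η/(λ·ρ·H)·(1 − (N−1)/(f_n·H))` is positive and is a Nash
equilibrium of the data owners' game. -/
theorem data_owners_nash (N : ℕ) (hN : 2 ≤ N) (f : Fin N → ℝ) (hf : ∀ n, 0 < f n)
    (η lam ρ : ℝ) (hη : 0 < η) (hlam : 0 < lam) (hρ : 0 < ρ)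
    (hpos : ∀ n, ((N : ℝ) - 1) < f n * ∑ i, 1 / f i)
    (q : Fin N → ℝ)
    (hq : ∀ n, q n = ((N : ℝ) - 1) * η / (lam * ρ * ∑ i, 1 / f i) *
      (1 - ((N : ℝ) - 1) / (f n * ∑ i, 1 / f i))) :
    (∀ n, 0 < q n) ∧
    ∀ n, ∀ x : ℝ, 0 ≤ x →
      η * x / (x + ∑ i ∈ Finset.univ.erase n, q i) - lam * ρ / f n * x ≤
      η * q n / (q n + ∑ i ∈ Finset.univ.erase n, q i) - lam * ρ / f n * q n := by
  set H := ∑ i, 1 / f i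
  set A := ((N : ℝ) - 1) * η / (lam * ρ * H) with hA_def
  have hN1 : (0 : ℝ) < N - 1 := by
    have : (2 : ℝ) ≤ N := by exact_mod_cast hN
    linarith
  have hH : 0 < H := sum_pos (fun i _ => one_div_pos.mpr (hf i)) ⟨⟨0, by omega⟩, mem_univ _⟩
  have hA : 0 < A := by positivity
  have hq_pos : ∀ n, 0 < q n := fun n => by
    rw [hq n]
    exact mul_pos hA (sub_pos.mpr ((div_lt_one (mul_pos (hf n) hH)).mpr (hpos n)))
  have hsum : ∑ i, q i = A := by
    have := sum_one_sub_div_mul_sum_inv f hH.ne'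
    rw [Fintype.card_fin] at this
    rw [sum_congr rfl fun i _ => hq i, ← mul_sum, this, mul_one]
  refine ⟨hq_pos, fun n x hx => ?_⟩
  have hrest : ∑ i ∈ univ.erase n, q i = A * (((N : ℝ) - 1) / (f n * H)) := by
    have := add_sum_erase univ q (mem_univ n)
    rw [hsum, hq n] at this
    linarith
  have hrest_pos : 0 < A * (((N : ℝ) - 1) / (f n * H)) :=
    mul_pos hA (div_pos hN1 (mul_pos (hf n) hH))
  rw [hrest]
  apply tullock_payoff_le_of_sq_eq (div_pos (mul_pos hlam hρ) (hf n)).le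
    (add_pos (hq_pos n) hrest_pos).ne' (add_pos_of_nonneg_of_pos hx hrest_pos)
  rw [hq n, hA_def]
  field_simp [(hf n).ne']
  ring
end

section
/- Let N ≥ 2, let f_n > 0 for all n ∈ {1,…,N}, let η > 0, λ > 0, ρ > 0, and set H = Σ_{i=1}^N 1/f_i. Suppose (q_1,…,q_N) is a profile with q_n > 0 for every n satisfying all first-order conditions η·(Σ_{i≠n} q_i)/(Σ_{i=1}^N q_i)² = λ·ρ/f_n. Then necessarily q_n = (N−1)·η/(λ·ρ·H) · (1 − (N−1)/(f_n·H)) for every n; in particular the interior Nash equilibrium of the data owners' game is unique. -/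
/-- any interior profile satisfying all first-order conditions of the
data owners' game equals the closed form; hence the interior Nash equilibrium is
unique. -/
theorem data_owners_nash_unique (N : ℕ) (hN : 2 ≤ N) (f : Fin N → ℝ) (hf : ∀ n, 0 < f n)
    (η lam ρ : ℝ) (hη : 0 < η) (hlam : 0 < lam) (hρ : 0 < ρ)
    (q : Fin N → ℝ) (hqpos : ∀ n, 0 < q n)
    (hfoc : ∀ n, η * (∑ i ∈ Finset.univ.erase n, q i) / (∑ i, q i) ^ 2 = lam * ρ / f n) :
    ∀ n, q n = ((N : ℝ) - 1) * η / (lam * ρ * ∑ i, 1 / f i) *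
      (1 - ((N : ℝ) - 1) / (f n * ∑ i, 1 / f i)) := by
  intro n
  have hNpos : 0 < N := by omega
  set Q := ∑ i, q i with hQdef
  set H := ∑ i, 1 / f i with hHdef
  have hQ : 0 < Q := Finset.sum_pos (fun i _ => hqpos i) ⟨n, Finset.mem_univ n⟩
  have hH : 0 < H := Finset.sum_pos (fun i _ => one_div_pos.mpr (hf i)) ⟨n, Finset.mem_univ n⟩
  have hfoc' : ∀ m, Q - q m = lam * ρ * Q ^ 2 / (η * f m) := by
    intro m
    have h := hfoc m
    rw [Finset.sum_erase_eq_sub (Finset.mem_univ m)] at h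
    have hfm := (hf m).ne'
    have hQne := hQ.ne'
    field_simp at h ⊢
    nlinarith [h]
  have hsum : (N : ℝ) * Q - Q = lam * ρ * Q ^ 2 / η * H := by
    calc (N : ℝ) * Q - Q = ∑ m : Fin N, (Q - q m) := by
          rw [Finset.sum_sub_distrib, Finset.sum_const, Finset.card_univ, Fintype.card_fin,
            nsmul_eq_mul, hQdef]
      _ = ∑ m : Fin N, lam * ρ * Q ^ 2 / (η * f m) := Finset.sum_congr rfl fun m _ => hfoc' m
      _ = lam * ρ * Q ^ 2 / η * H := by
          rw [hHdef, Finset.mul_sum]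
          exact Finset.sum_congr rfl fun m _ => by ring
  have hsum' : ((N : ℝ) * Q - Q) * η = lam * ρ * Q ^ 2 * H := by
    rw [hsum]; field_simp
  have hcancel : Q * (Q * (lam * ρ * H)) = Q * (((N : ℝ) - 1) * η) := by
    linear_combination -hsum'
  have hQmul : Q * (lam * ρ * H) = ((N : ℝ) - 1) * η := mul_left_cancel₀ hQ.ne' hcancel
  have hQval : Q = ((N : ℝ) - 1) * η / (lam * ρ * H) := by
    rw [eq_div_iff (by positivity)]
    exact hQmul
  have hq : q n = Q - lam * ρ * Q ^ 2 / (η * f n) := by linarith [hfoc' n]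
  rw [hq, hQval]
  have h1 : η ≠ 0 := hη.ne'
  have h2 : lam ≠ 0 := hlam.ne'
  have h3 : ρ ≠ 0 := hρ.ne'
  have h4 : f n ≠ 0 := (hf n).ne'
  have h5 : H ≠ 0 := hH.ne'
  field_simp
end

section
/- Let N ≥ 2, let f_n > 0 for all n ∈ {1,…,N}, let η > 0, λ > 0, ρ > 0, set H = Σ_{i=1}^N 1/f_i, and define q*_n = (N−1)·η/(λ·ρ·H) · (1 − (N−1)/(f_n·H)). Then the equilibrium utility of data owner D_n has the closed form U_n(q*_n, q*_{−n}) = (q*_n/Σ_{i=1}^N q*_i)·η − λ·ρ·q*_n/f_n = η·(1 − (N−1)/(f_n·H))². -/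
/-- at the interior Nash equilibrium
`q*_n = (N−1)·η/(λ·ρ·H)·(1 − (N−1)/(f_n·H))`, the equilibrium utility of data owner
`D_n` equals `η·(1 − (N−1)/(f_n·H))²`. -/
theorem data_owner_equilibrium_utility (N : ℕ) (hN : 2 ≤ N) (f : Fin N → ℝ)
    (hf : ∀ n, 0 < f n) (η lam ρ : ℝ) (hη : 0 < η) (hlam : 0 < lam) (hρ : 0 < ρ)
    (q : Fin N → ℝ)
    (hq : ∀ n, q n = ((N : ℝ) - 1) * η / (lam * ρ * ∑ i, 1 / f i) *
      (1 - ((N : ℝ) - 1) / (f n * ∑ i, 1 / f i))) :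
    ∀ n, q n / (∑ i, q i) * η - lam * ρ * q n / f n =
      η * (1 - ((N : ℝ) - 1) / (f n * ∑ i, 1 / f i)) ^ 2 := by
  intro n
  set H : ℝ := ∑ i, 1 / f i with hH
  have hHpos : 0 < H := Finset.sum_pos (fun i _ => one_div_pos.mpr (hf i)) (by
    simp [Finset.univ_nonempty_iff]
    exact Fin.pos_iff_nonempty.mp (lt_of_lt_of_le (by norm_num) hN))
  set c : ℝ := ((N : ℝ) - 1) * η / (lam * ρ * H) with hc
  have hN1 : (0 : ℝ) < (N : ℝ) - 1 := by
    have : (2 : ℝ) ≤ (N : ℝ) := by exact_mod_cast hN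
    linarith
  have hcpos : 0 < c := by
    apply div_pos (by positivity) (by positivity)
  have hsum : (∑ i, q i) = c := by
    have : (∑ i, q i) = ∑ i, (c - c * (((N : ℝ) - 1) / H) * (1 / f i)) := by
      apply Finset.sum_congr rfl
      intro i _
      rw [hq i]
      have hfi := (hf i).ne'
      field_simp
    rw [this, Finset.sum_sub_distrib]
    rw [← Finset.mul_sum, ← hH]
    simp only [Finset.sum_const, Finset.card_univ, Fintype.card_fin, nsmul_eq_mul]
    have : c * (((N : ℝ) - 1) / H) * H = c * ((N : ℝ) - 1) := by
      field_simp
    rw [this]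
    ring
  rw [hsum, hq n]
  have hfn := (hf n).ne'
  have hHne := hHpos.ne'
  have hcne := hcpos.ne'
  have h1 : c * (1 - ((N : ℝ) - 1) / (f n * H)) / c = 1 - ((N : ℝ) - 1) / (f n * H) := by
    field_simp
  rw [h1]
  have hc2 : lam * ρ * (c * (1 - ((N : ℝ) - 1) / (f n * H))) / f n
      = η * (((N : ℝ) - 1) / (f n * H)) * (1 - ((N : ℝ) - 1) / (f n * H)) := by
    rw [hc]
    field_simp
  rw [hc2]
  ring
end
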